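/- The orchestration synthesis function f_o, which at each step removes from K all request transitions and all transitions with target in R, and adds to R the sources of necessary transitions of A that are uncontrollable in the pruned automaton together with its dangling states, is monotone on the cpo of pairs ordered by (K,R) ≤ (K',R') iff T_{K'} ⊆ T_K and R ⊆ R', and hence has a least fixed point reached in finitely many iterations. -/

import Mathlib

structure Auto (Q L : Type) where
  q0 : Q
  T : Set (Q × L × Q)
  F : Set Q

def stepRel {Q L : Type} (T : Set (Q × L × Q)) (q q' : Q) : Prop :=
  ∃ a, (q, a, q') ∈ T

def ReachT {Q L : Type} (T : Set (Q × L × Q)) : Q → Q → Prop :=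
  Relation.ReflTransGen (stepRel T)

def DanglingT {Q L : Type} (q0 : Q) (F : Set Q) (T : Set (Q × L × Q)) (q : Q) : Prop :=
  ¬ ReachT T q0 q ∨ ¬ ∃ qf ∈ F, ReachT T q qf

def pairLe {α β : Type} (p p' : Set α × Set β) : Prop :=
  p'.1 ⊆ p.1 ∧ p.2 ⊆ p'.2

/-- Basic actions of a contract automaton: idle, request, or offer. -/
inductive BAct (R : Type) where
  | idle : BAct R
  | req : R → BAct R
  | off : R → BAct R

abbrev CSt (n : ℕ) (S : Type) := Fin n → S
abbrev CAct (n : ℕ) (R : Type) := Fin n → BAct R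
abbrev CTrans (n : ℕ) (S R : Type) := CSt n S × CAct n R × CSt n S

def isRequest {n : ℕ} {R : Type} (a : CAct n R) : Prop :=
  ∃ i r, a i = BAct.req r ∧ ∀ j, j ≠ i → a j = BAct.idle

def isOffer {n : ℕ} {R : Type} (a : CAct n R) : Prop :=
  ∃ i r, a i = BAct.off r ∧ ∀ j, j ≠ i → a j = BAct.idle

def isMatch {n : ℕ} {R : Type} (a : CAct n R) : Prop :=
  ∃ i j r, i ≠ j ∧ a i = BAct.req r ∧ a j = BAct.off r ∧
    ∀ k, k ≠ i → k ≠ j → a k = BAct.idle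

/-- `sndIs a i` : the `i`-th component of `a` is an offer, i.e. `snd(a) = i`. -/
def sndIs {n : ℕ} {R : Type} (a : CAct n R) (i : Fin n) : Prop :=
  ∃ r, a i = BAct.off r

/-- A (modal service) contract automaton of rank `n`, with necessary
transitions `Tnec ⊆ T` (the remaining ones being permitted). -/
structure CA (n : ℕ) (S R : Type) where
  q0 : CSt n S
  T : Set (CTrans n S R)
  Tnec : Set (CTrans n S R)
  F : Set (CSt n S)

/-- `t` is controllable (orchestration sense) in the sub-automaton with
transitions `TK` via witness `t'`. -/
def OrcControllableVia {n : ℕ} {S R : Type} (A : CA n S R) (TK : Set (CTrans n S R))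
    (t t' : CTrans n S R) : Prop :=
  t' ∈ A.Tnec ∧ t' ∈ TK ∧ isMatch t'.2.1 ∧
  ¬ DanglingT A.q0 A.F TK t'.1 ∧ ¬ DanglingT A.q0 A.F TK t'.2.2 ∧
  ∃ i r, t.1 i = t'.1 i ∧ t.2.1 i = BAct.req r ∧ t'.2.1 i = BAct.req r

def OrcControllable {n : ℕ} {S R : Type} (A : CA n S R) (TK : Set (CTrans n S R))
    (t : CTrans n S R) : Prop :=
  ∃ t', OrcControllableVia A TK t t'

/-- The orchestration synthesis step. -/
def orcF {n : ℕ} {S R : Type} (A : CA n S R)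
    (p : Set (CTrans n S R) × Set (CSt n S)) : Set (CTrans n S R) × Set (CSt n S) :=
  let TK' := {t ∈ p.1 | ¬ (t.2.2 ∈ p.2 ∨ isRequest t.2.1)}
  (TK', p.2 ∪ {q | ∃ t ∈ A.Tnec, t.1 = q ∧ ¬ OrcControllable A TK' t}
            ∪ {q | DanglingT A.q0 A.F TK' q})

/-- Restriction of transitions to states outside the bad set. -/
def restr {n : ℕ} {S R : Type} (Ks : Set (CTrans n S R)) (Rs : Set (CSt n S)) :
    Set (CTrans n S R) :=
  {t ∈ Ks | t.1 ∉ Rs ∧ t.2.2 ∉ Rs}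

/-!
Removing transitions can only create dangling states and destroy controllability witnesses, so
`orcF` is monotone; it is also inflationary, since it only shrinks `K` and enlarges `R`. Its
iterates from the initial pair therefore form an ascending chain in a finite partial order, which
stabilises, and by monotonicity the limit lies below every fixed point above the initial pair.
-/

instance BAct.instFinite {R : Type} [Finite R] : Finite (BAct R) := by
  apply Finite.of_surjective (fun o : Unit ⊕ R ⊕ R =>
    match o with
    | Sum.inl _ => BAct.idle
    | Sum.inr (Sum.inl r) => BAct.req r
    | Sum.inr (Sum.inr r) => BAct.off r)
  intro b
  cases b with
  | idle => exact ⟨Sum.inl (), rfl⟩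
  | req r => exact ⟨Sum.inr (Sum.inl r), rfl⟩
  | off r => exact ⟨Sum.inr (Sum.inr r), rfl⟩

/-- The cpo of pairs `(K, R)`: its `≤` is `pairLe`. -/
abbrev PairOrder (α β : Type) : Type := (Set α)ᵒᵈ × Set β

section FixedPoint

variable {α : Type*} {f : α → α}

theorem exists_isFixedPt_iterate_of_id_le [PartialOrder α] [WellFoundedGT α] (hf : id ≤ f)
    (x : α) : ∃ k, f (f^[k] x) = f^[k] x := by
  obtain ⟨k, hk⟩ := WellFoundedGT.monotone_chain_condition
    ⟨fun m => f^[m] x, fun _ _ h => Function.monotone_iterate_of_id_le hf h x⟩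
  refine ⟨k, ?_⟩
  rw [← Function.iterate_succ_apply' f]
  exact (hk (k + 1) k.le_succ).symm

theorem Monotone.iterate_le_of_isFixedPt [Preorder α] (hf : Monotone f) {x y : α} (hxy : x ≤ y)
    (hy : f y = y) (k : ℕ) : f^[k] x ≤ y :=
  Function.iterate_fixed hy k ▸ hf.iterate k hxy

end FixedPoint

section Dangling

variable {Q L : Type} {T T' : Set (Q × L × Q)}

theorem ReachT.mono (h : T ⊆ T') {q q' : Q} (hr : ReachT T q q') : ReachT T' q q' :=
  Relation.ReflTransGen.mono (r := stepRel T) (fun _ _ ⟨a, ha⟩ => ⟨a, h ha⟩) _ _ hr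

theorem DanglingT.anti {q0 : Q} {F : Set Q} (h : T' ⊆ T) {q : Q} (hd : DanglingT q0 F T q) :
    DanglingT q0 F T' q :=
  hd.imp (fun hn hr => hn (hr.mono h)) (fun hn ⟨qf, hqf, hr⟩ => hn ⟨qf, hqf, hr.mono h⟩)

end Dangling

section Orchestration

variable {n : ℕ} {S R : Type} (A : CA n S R)

theorem OrcControllable.mono {TK TK' : Set (CTrans n S R)} (h : TK ⊆ TK') {t : CTrans n S R}
    (hc : OrcControllable A TK t) : OrcControllable A TK' t := by
  obtain ⟨t', hnec, hK, hmatch, hsrc, htgt, hreq⟩ := hc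
  exact ⟨t', hnec, h hK, hmatch, fun hd => hsrc (hd.anti h), fun hd => htgt (hd.anti h), hreq⟩

theorem orcF_mono {p p' : Set (CTrans n S R) × Set (CSt n S)} (h : pairLe p p') :
    pairLe (orcF A p) (orcF A p') := by
  obtain ⟨hK, hR⟩ := h
  have hpruned : (orcF A p').1 ⊆ (orcF A p).1 := fun t ⟨ht, hkeep⟩ =>
    ⟨hK ht, fun hdrop => hkeep (hdrop.imp_left (fun h => hR h))⟩
  refine ⟨hpruned, ?_⟩
  rintro q ((hq | ⟨t, hnec, rfl, hunc⟩) | hq)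
  · exact Or.inl (Or.inl (hR hq))
  · exact Or.inl (Or.inr ⟨t, hnec, rfl, fun hc => hunc (hc.mono A hpruned)⟩)
  · exact Or.inr (hq.anti hpruned)

theorem pairLe_orcF (p : Set (CTrans n S R) × Set (CSt n S)) : pairLe p (orcF A p) :=
  ⟨fun _ ht => ht.1, fun _ hq => Or.inl (Or.inl hq)⟩

end Orchestration

theorem stmt7_general {n : ℕ} {S R : Type} [Fintype S] [Fintype R] (A : CA n S R) :
    (∀ p p', pairLe p p' → pairLe (orcF A p) (orcF A p')) ∧
    (∃ k, orcF A ((orcF A)^[k] (A.T, {q | DanglingT A.q0 A.F A.T q}))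
            = (orcF A)^[k] (A.T, {q | DanglingT A.q0 A.F A.T q}) ∧
      pairLe (A.T, {q | DanglingT A.q0 A.F A.T q})
             ((orcF A)^[k] (A.T, {q | DanglingT A.q0 A.F A.T q})) ∧
      ∀ x, orcF A x = x → pairLe (A.T, {q | DanglingT A.q0 A.F A.T q}) x →
        pairLe ((orcF A)^[k] (A.T, {q | DanglingT A.q0 A.F A.T q})) x) := by
  let f : PairOrder (CTrans n S R) (CSt n S) → PairOrder (CTrans n S R) (CSt n S) := orcF A
  have hmono : Monotone f := fun _ _ => orcF_mono A
  have hinfl : id ≤ f := pairLe_orcF A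
  obtain ⟨k, hk⟩ := exists_isFixedPt_iterate_of_id_le hinfl (A.T, {q | DanglingT A.q0 A.F A.T q})
  exact ⟨hmono, k, hk, Function.id_le_iterate_of_id_le hinfl k _,
    fun x hx hx0 => hmono.iterate_le_of_isFixedPt hx0 hx k⟩

/-- The orchestration synthesis function is monotone on the cpo of pairs and
hence has a least fixed point above the starting pair, reached after finitely
many iterations. -/
theorem stmt7 {n : ℕ} {S R : Type} [Fintype S] [Fintype R] (A : CA n S R)
    (hnec : A.Tnec ⊆ A.T) :
    (∀ p p', pairLe p p' → pairLe (orcF A p) (orcF A p')) ∧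
    (∃ k, orcF A ((orcF A)^[k] (A.T, {q | DanglingT A.q0 A.F A.T q}))
            = (orcF A)^[k] (A.T, {q | DanglingT A.q0 A.F A.T q}) ∧
      pairLe (A.T, {q | DanglingT A.q0 A.F A.T q})
             ((orcF A)^[k] (A.T, {q | DanglingT A.q0 A.F A.T q})) ∧
      ∀ x, orcF A x = x → pairLe (A.T, {q | DanglingT A.q0 A.F A.T q}) x →
        pairLe ((orcF A)^[k] (A.T, {q | DanglingT A.q0 A.F A.T q})) x) :=
  stmt7_general A
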